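/- arXiv:2602.12181 — 6 statements merged into one kernel-verified Lean document; each statement's English description precedes it below -/
import Mathlib

section
/- Relating first-order stationarity to the gradient mapping: Let K be a nonempty closed convex subset of ℝ^n, let Φ : ℝ^n → ℝ be differentiable with β-Lipschitz gradient, let η > 0, let x ∈ K, and set x⁺ = Proj_K(x + η ∇Φ(x)) and G = (1/η)(x⁺ − x). Then for every x' ∈ K, ⟨∇Φ(x⁺), x' − x⁺⟩ ≤ (1 + ηβ) ‖G‖ · ‖x' − x⁺‖. -/
open scoped RealInnerProductSpace

/-- `p` is the Euclidean metric projection of `z` onto the nonempty closed convex set `K`,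
via the variational characterization. -/
def IsProjOn {n : ℕ} (K : Set (EuclideanSpace ℝ (Fin n)))
    (z p : EuclideanSpace ℝ (Fin n)) : Prop :=
  p ∈ K ∧ ∀ y ∈ K, ⟪y - p, z - p⟫ ≤ 0

/-- Relating first-order stationarity to the gradient mapping:
with `x⁺ = Proj_K(x + η ∇Φ(x))` and `G = (1/η)(x⁺ - x)`, one has
`⟪∇Φ(x⁺), x' - x⁺⟫ ≤ (1 + ηβ) ‖G‖ ‖x' - x⁺‖` for every `x' ∈ K`. -/
theorem fos_vs_gradient_mapping
    {n : ℕ} (K : Set (EuclideanSpace ℝ (Fin n)))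
    (hne : K.Nonempty) (hclosed : IsClosed K) (hconv : Convex ℝ K)
    (Φ : EuclideanSpace ℝ (Fin n) → ℝ)
    (Φ' : EuclideanSpace ℝ (Fin n) → EuclideanSpace ℝ (Fin n))
    (hdiff : ∀ x, HasGradientAt Φ (Φ' x) x)
    (β : ℝ) (hlip : ∀ x y, ‖Φ' x - Φ' y‖ ≤ β * ‖x - y‖)
    (η : ℝ) (hη : 0 < η)
    (x : EuclideanSpace ℝ (Fin n)) (hx : x ∈ K)
    (xp : EuclideanSpace ℝ (Fin n)) (hproj : IsProjOn K (x + η • Φ' x) xp) :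
    ∀ x' ∈ K, ⟪Φ' xp, x' - xp⟫ ≤ (1 + η * β) * ‖(1 / η) • (xp - x)‖ * ‖x' - xp‖ := by
  intro x' hx'
  have hG : ‖(1 / η) • (xp - x)‖ = (1 / η) * ‖xp - x‖ := by
    rw [norm_smul, Real.norm_eq_abs, abs_of_pos (by positivity : (0:ℝ) < 1/η)]
  have hineq := hproj.2 x' hx'
  have hexp : ⟪x' - xp, x - xp⟫ + η * ⟪x' - xp, Φ' x⟫ ≤ 0 := by
    have : (x + η • Φ' x) - xp = (x - xp) + η • Φ' x := by abel
    rw [this, inner_add_right, real_inner_smul_right] at hineq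
    linarith
  have h1 : ⟪Φ' xp - Φ' x, x' - xp⟫ ≤ β * ‖xp - x‖ * ‖x' - xp‖ :=
    (real_inner_le_norm _ _).trans
      (mul_le_mul_of_nonneg_right (hlip xp x) (norm_nonneg _))
  have h3 : -⟪x' - xp, x - xp⟫ ≤ ‖xp - x‖ * ‖x' - xp‖ := by
    have := real_inner_le_norm (x' - xp) (xp - x)
    have heq : ⟪x' - xp, xp - x⟫ = -⟪x' - xp, x - xp⟫ := by
      have : (xp - x : EuclideanSpace ℝ (Fin n)) = -(x - xp) := by abel
      rw [this, inner_neg_right]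
    rw [heq] at this
    calc -⟪x' - xp, x - xp⟫ ≤ ‖x' - xp‖ * ‖xp - x‖ := this
      _ = ‖xp - x‖ * ‖x' - xp‖ := mul_comm _ _
  have hsplit : ⟪Φ' xp, x' - xp⟫ = ⟪Φ' xp - Φ' x, x' - xp⟫ + ⟪x' - xp, Φ' x⟫ := by
    rw [inner_sub_left, real_inner_comm (x' - xp) (Φ' x)]; ring
  rw [hG, hsplit]
  have hη' : 0 < 1/η := by positivity
  have key : η * ⟪x' - xp, Φ' x⟫ ≤ ‖xp - x‖ * ‖x' - xp‖ := by linarith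
  have key2 : ⟪x' - xp, Φ' x⟫ ≤ (1/η) * (‖xp - x‖ * ‖x' - xp‖) := by
    rw [div_mul_eq_mul_div, one_mul, le_div_iff₀ hη, mul_comm]
    exact key
  have : (1 + η * β) * ((1/η) * ‖xp - x‖) * ‖x' - xp‖
      = (1/η) * (‖xp - x‖ * ‖x' - xp‖) + β * ‖xp - x‖ * ‖x' - xp‖ := by
    field_simp
  rw [this]
  linarith
end

section
/- Stationarity rate of inexact projected gradient descent: Let K be a nonempty closed convex subset of ℝ^n, let Φ : ℝ^n → ℝ be differentiable with β-Lipschitz gradient, and suppose Φ_min ≤ Φ(x) ≤ Φ_max for all x ∈ K. Let x^0 ∈ K, let g^0, g^1, … be vectors in ℝ^n with ‖g^t − ∇Φ(x^t)‖ ≤ τ for all t, and let x^{t+1} = Proj_K(x^t − η g^t) with step size 0 < η ≤ 1/(1+β). Define the inexact gradient mapping Ĝ^t = (1/η)(x^{t+1} − x^t). Then for every T ≥ 1, (1/T) Σ_{t=0}^{T−1} ‖Ĝ^t‖² ≤ 2(Φ_max − Φ_min)/(η T) + τ²/η. -/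
open scoped RealInnerProductSpace

-- descent lemma
lemma descent_lemma {n : ℕ} (Φ : EuclideanSpace ℝ (Fin n) → ℝ)
    (Φ' : EuclideanSpace ℝ (Fin n) → EuclideanSpace ℝ (Fin n))
    (hdiff : ∀ x, HasGradientAt Φ (Φ' x) x)
    (β : ℝ) (hlip : ∀ x y, ‖Φ' x - Φ' y‖ ≤ β * ‖x - y‖)
    (p q : EuclideanSpace ℝ (Fin n)) :
    Φ q ≤ Φ p + ⟪Φ' p, q - p⟫ + β / 2 * ‖q - p‖ ^ 2 := by
  set d := q - p with hd
  set ψ : ℝ → ℝ := fun t => Φ (p + t • d) - t * ⟪Φ' p, d⟫ - β * t ^ 2 / 2 * ‖d‖ ^ 2 with hψdef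
  have hψ : ∀ t : ℝ, HasDerivAt ψ
      (⟪Φ' (p + t • d), d⟫ - ⟪Φ' p, d⟫ - β * t * ‖d‖ ^ 2) t := by
    intro t
    have hline : HasDerivAt (fun t : ℝ => p + t • d) d t := by
      simpa using ((hasDerivAt_id t).smul_const d).const_add p
    have h1 : HasDerivAt (fun t : ℝ => Φ (p + t • d)) ⟪Φ' (p + t • d), d⟫ t := by
      have := (hdiff (p + t • d)).hasFDerivAt.comp_hasDerivAt t hline
      simp at this
      exact this
    have h2 : HasDerivAt (fun t : ℝ => t * ⟪Φ' p, d⟫) ⟪Φ' p, d⟫ t := by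
      simpa using (hasDerivAt_id t).mul_const (⟪Φ' p, d⟫)
    have h3 : HasDerivAt (fun t : ℝ => β * t ^ 2 / 2 * ‖d‖ ^ 2) (β * t * ‖d‖ ^ 2) t := by
      have : HasDerivAt (fun t : ℝ => t ^ 2) (2 * t) t := by
        simpa using hasDerivAt_pow 2 t
      have := ((this.const_mul β).div_const 2).mul_const (‖d‖ ^ 2)
      rw [show β * t * ‖d‖ ^ 2 = β * (2 * t) / 2 * ‖d‖ ^ 2 by ring]
      exact this
    exact (h1.sub h2).sub h3
  have key : ψ 1 ≤ ψ 0 := by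
    have hanti : AntitoneOn ψ (Set.Icc (0:ℝ) 1) := by
      apply antitoneOn_of_deriv_nonpos (convex_Icc 0 1)
      · exact fun t _ => (hψ t).continuousAt.continuousWithinAt
      · exact fun t _ => ((hψ t).differentiableAt).differentiableWithinAt
      · intro t ht
        rw [interior_Icc] at ht
        rw [(hψ t).deriv]
        have h1 : ⟪Φ' (p + t • d), d⟫ - ⟪Φ' p, d⟫ = ⟪Φ' (p + t • d) - Φ' p, d⟫ := by
          rw [inner_sub_left]
        rw [h1]
        have h2 : ⟪Φ' (p + t • d) - Φ' p, d⟫ ≤ ‖Φ' (p + t • d) - Φ' p‖ * ‖d‖ :=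
          real_inner_le_norm _ _
        have h3 : ‖Φ' (p + t • d) - Φ' p‖ ≤ β * (t * ‖d‖) := by
          have := hlip (p + t • d) p
          simpa [norm_smul, abs_of_pos ht.1, mul_assoc] using this
        nlinarith [norm_nonneg d, mul_le_mul_of_nonneg_right h3 (norm_nonneg d)]
    exact hanti (Set.mem_Icc.2 ⟨le_refl 0, zero_le_one⟩) (Set.mem_Icc.2 ⟨zero_le_one, le_refl 1⟩) zero_le_one
  have e0 : ψ 0 = Φ p := by simp [hψdef]
  have e1 : ψ 1 = Φ q - ⟪Φ' p, d⟫ - β / 2 * ‖d‖ ^ 2 := by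
    simp [hψdef]
    simp [hd]
  rw [e0, e1] at key
  linarith

/-- Stationarity rate of inexact projected gradient descent.
Here `x^{t+1} = Proj_K(x^t - η g^t)` with gradient errors `‖g^t - ∇Φ(x^t)‖ ≤ τ`, and
`(1/η) • (x (t+1) - x t)` is the inexact gradient mapping `Ĝ^t`. -/
theorem inexact_pgd_stationarity_rate
    {n : ℕ} (K : Set (EuclideanSpace ℝ (Fin n)))
    (hne : K.Nonempty) (hclosed : IsClosed K) (hconv : Convex ℝ K)
    (Φ : EuclideanSpace ℝ (Fin n) → ℝ)
    (Φ' : EuclideanSpace ℝ (Fin n) → EuclideanSpace ℝ (Fin n))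
    (hdiff : ∀ x, HasGradientAt Φ (Φ' x) x)
    (β : ℝ) (hlip : ∀ x y, ‖Φ' x - Φ' y‖ ≤ β * ‖x - y‖)
    (Φmin Φmax : ℝ) (hbdd : ∀ x ∈ K, Φmin ≤ Φ x ∧ Φ x ≤ Φmax)
    (τ : ℝ) (hτ : 0 ≤ τ)
    (η : ℝ) (hη0 : 0 < η) (hη : η ≤ 1 / (1 + β))
    (x : ℕ → EuclideanSpace ℝ (Fin n)) (g : ℕ → EuclideanSpace ℝ (Fin n))
    (hx0 : x 0 ∈ K)
    (hg : ∀ t, ‖g t - Φ' (x t)‖ ≤ τ)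
    (hstep : ∀ t, IsProjOn K (x t - η • g t) (x (t + 1))) :
    ∀ T : ℕ, 1 ≤ T →
      (1 / (T : ℝ)) * ∑ t ∈ Finset.range T, ‖(1 / η) • (x (t + 1) - x t)‖ ^ 2 ≤
        2 * (Φmax - Φmin) / (η * (T : ℝ)) + τ ^ 2 / η := by
  have hβ1 : 0 < 1 + β := by
    rcases lt_or_ge 0 (1 + β) with h | h
    · exact h
    · exfalso
      have : 1 / (1 + β) ≤ 0 := div_nonpos_of_nonneg_of_nonpos zero_le_one h
      linarith
  have hηβ : η * (1 + β) ≤ 1 := by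
    rw [le_div_iff₀ hβ1] at hη; linarith
  have hmem : ∀ t, x t ∈ K := by
    intro t
    induction t with
    | zero => exact hx0
    | succ t ih => exact (hstep t).1
  have hstep' : ∀ t, ‖x (t + 1) - x t‖ ^ 2 ≤
      2 * η * (Φ (x t) - Φ (x (t + 1))) + η * τ ^ 2 := by
    intro t
    set d := x (t + 1) - x t with hd
    have hproj := (hstep t).2 (x t) (hmem t)
    have hpr : ‖d‖ ^ 2 + η * ⟪d, g t⟫ ≤ 0 := by
      have e1 : (x t : EuclideanSpace ℝ (Fin n)) - x (t + 1) = -d := by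
        rw [hd]; abel
      have e2 : (x t - η • g t) - x (t + 1) = -d - η • g t := by
        rw [hd]; abel
      rw [e1, e2] at hproj
      have e3 : ⟪-d, -d - η • g t⟫ = ‖d‖ ^ 2 + η * ⟪d, g t⟫ := by
        rw [inner_sub_right, inner_neg_neg, inner_neg_left, real_inner_smul_right,
          real_inner_self_eq_norm_sq]
        ring
      rw [e3] at hproj
      exact hproj
    have hdes := descent_lemma Φ Φ' hdiff β hlip (x t) (x (t + 1))
    rw [← hd] at hdes
    have herr : ⟪Φ' (x t) - g t, d⟫ ≤ τ * ‖d‖ := by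
      calc ⟪Φ' (x t) - g t, d⟫ ≤ ‖Φ' (x t) - g t‖ * ‖d‖ := real_inner_le_norm _ _
        _ ≤ τ * ‖d‖ := by
            apply mul_le_mul_of_nonneg_right _ (norm_nonneg d)
            rw [← norm_neg]; simpa using hg t
    have hτd : τ * ‖d‖ ≤ τ ^ 2 / 2 + ‖d‖ ^ 2 / 2 := by nlinarith [sq_nonneg (τ - ‖d‖)]
    have hA : ⟪Φ' (x t), d⟫ ≤ ⟪d, g t⟫ + τ ^ 2 / 2 + ‖d‖ ^ 2 / 2 := by
      have hsplit : ⟪Φ' (x t), d⟫ = ⟪g t, d⟫ + ⟪Φ' (x t) - g t, d⟫ := by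
        rw [inner_sub_left]; ring
      have hgd : ⟪g t, d⟫ = ⟪d, g t⟫ := real_inner_comm _ _
      rw [hsplit, hgd]; linarith
    have hmul1 := mul_le_mul_of_nonneg_left hdes hη0.le
    have hmul2 := mul_le_mul_of_nonneg_left hA hη0.le
    have hmul3 := mul_le_mul_of_nonneg_right hηβ (sq_nonneg ‖d‖)
    nlinarith [hpr]
  intro T hT
  have hTpos : (0:ℝ) < T := by exact_mod_cast hT
  have hsum : ∑ t ∈ Finset.range T, ‖x (t + 1) - x t‖ ^ 2 ≤
      2 * η * (Φmax - Φmin) + T * (η * τ ^ 2) := by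
    calc ∑ t ∈ Finset.range T, ‖x (t + 1) - x t‖ ^ 2
        ≤ ∑ t ∈ Finset.range T, (2 * η * (Φ (x t) - Φ (x (t + 1))) + η * τ ^ 2) :=
          Finset.sum_le_sum fun t _ => hstep' t
      _ = 2 * η * (Φ (x 0) - Φ (x T)) + T * (η * τ ^ 2) := by
          rw [Finset.sum_add_distrib, ← Finset.mul_sum, Finset.sum_const, Finset.card_range]
          rw [Finset.sum_range_sub' (fun t => Φ (x t))]
          simp [nsmul_eq_mul]
      _ ≤ 2 * η * (Φmax - Φmin) + T * (η * τ ^ 2) := by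
          have h0 := hbdd (x 0) (hmem 0)
          have hT' := hbdd (x T) (hmem T)
          nlinarith
  have hrw : ∀ t, ‖(1 / η) • (x (t + 1) - x t)‖ ^ 2 = (1 / η ^ 2) * ‖x (t + 1) - x t‖ ^ 2 := by
    intro t
    rw [norm_smul, Real.norm_eq_abs, abs_of_pos (by positivity)]
    field_simp
  simp only [hrw]
  rw [← Finset.mul_sum]
  rw [div_add_div _ _ (by positivity : (η * (T : ℝ)) ≠ 0) (ne_of_gt hη0)]
  rw [le_div_iff₀ (by positivity : (0:ℝ) < η * (T : ℝ) * η)]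
  have heq : 1 / (T:ℝ) * (1 / η ^ 2 * ∑ t ∈ Finset.range T, ‖x (t + 1) - x t‖ ^ 2) *
      (η * (T:ℝ) * η) = ∑ t ∈ Finset.range T, ‖x (t + 1) - x t‖ ^ 2 := by
    field_simp
  rw [heq]
  nlinarith [hsum]
end

section
/- ℓ¹–ℓ² bound for a deviation of product policies: For every agent i and every state s ∈ S, ‖π_{−i}(·|s) − π'_{−i}(·|s)‖₁ ≤ √(Σ_{k=1}^N |A_k|) · ‖π − π'‖₂. -/
/-- Sum over a dependent pi type of a product factorizes. -/
lemma sum_pi_prod' {m : ℕ} (B : Fin m → Type) [∀ j, Fintype (B j)]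
    (f : ∀ j, B j → ℝ) :
    ∑ b : ∀ j, B j, ∏ j, f j (b j) = ∏ j, ∑ a, f j a :=
  (Fintype.prod_sum f).symm

/-- Key total-variation bound for products over `Fin m`. -/
lemma key_fin : ∀ (m : ℕ) (B : Fin m → Type) (_ : ∀ j, Fintype (B j))
    (p q : ∀ j, B j → ℝ),
    (∀ j a, 0 ≤ p j a) → (∀ j, ∑ a, p j a = 1) →
    (∀ j a, 0 ≤ q j a) → (∀ j, ∑ a, q j a = 1) →
    ∑ b : ∀ j, B j, |(∏ j, p j (b j)) - ∏ j, q j (b j)| ≤ ∑ j, ∑ a, |p j a - q j a| := by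
  intro m
  induction m with
  | zero => intro B _ p q _ _ _ _; simp
  | succ n ih =>
    intro B _ p q hp0 hp1 hq0 hq1
    rw [← Equiv.sum_comp (Fin.consEquiv B), Fintype.sum_prod_type]
    simp only [Fin.consEquiv_apply, Fin.prod_univ_succ, Fin.cons_zero, Fin.cons_succ]
    have hQ0 : ∀ y : ∀ j : Fin n, B j.succ, 0 ≤ ∏ j, q j.succ (y j) := fun y =>
      Finset.prod_nonneg fun j _ => hq0 _ _
    have step : ∀ (x : B 0) (y : ∀ j : Fin n, B j.succ),
        |p 0 x * ∏ j, p j.succ (y j) - q 0 x * ∏ j, q j.succ (y j)| ≤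
          p 0 x * |(∏ j, p j.succ (y j)) - ∏ j, q j.succ (y j)|
            + |p 0 x - q 0 x| * ∏ j, q j.succ (y j) := by
      intro x y
      have hrw : p 0 x * ∏ j, p j.succ (y j) - q 0 x * ∏ j, q j.succ (y j)
          = p 0 x * ((∏ j, p j.succ (y j)) - ∏ j, q j.succ (y j))
            + (p 0 x - q 0 x) * ∏ j, q j.succ (y j) := by ring
      rw [hrw]
      refine (abs_add_le _ _).trans ?_
      rw [abs_mul, abs_mul, abs_of_nonneg (hp0 0 x), abs_of_nonneg (hQ0 y)]
    have hIH := ih (fun j => B j.succ) (fun j => inferInstance)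
      (fun j => p j.succ) (fun j => q j.succ)
      (fun j a => hp0 _ _) (fun j => hp1 _) (fun j a => hq0 _ _) (fun j => hq1 _)
    have hQsum : ∑ y : ∀ j : Fin n, B j.succ, ∏ j, q j.succ (y j) = 1 := by
      rw [sum_pi_prod']
      rw [Finset.prod_eq_one]
      intro j _
      exact hq1 _
    calc ∑ x : B 0, ∑ y : ∀ j : Fin n, B j.succ,
          |p 0 x * ∏ j, p j.succ (y j) - q 0 x * ∏ j, q j.succ (y j)|
        ≤ ∑ x : B 0, ∑ y : ∀ j : Fin n, B j.succ,
            (p 0 x * |(∏ j, p j.succ (y j)) - ∏ j, q j.succ (y j)|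
              + |p 0 x - q 0 x| * ∏ j, q j.succ (y j)) := by
          refine Finset.sum_le_sum fun x _ => Finset.sum_le_sum fun y _ => step x y
      _ = (∑ x : B 0, p 0 x) * (∑ y : ∀ j : Fin n, B j.succ,
            |(∏ j, p j.succ (y j)) - ∏ j, q j.succ (y j)|)
          + (∑ x : B 0, |p 0 x - q 0 x|) * (∑ y : ∀ j : Fin n, B j.succ, ∏ j, q j.succ (y j)) := by
          simp only [Finset.sum_add_distrib, Finset.mul_sum, Finset.sum_mul]
          congr 1 <;> exact Finset.sum_comm
      _ ≤ 1 * (∑ j : Fin n, ∑ a, |p j.succ a - q j.succ a|)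
          + (∑ x : B 0, |p 0 x - q 0 x|) * 1 := by
          rw [hp1 0, hQsum]
          have h1 : (0:ℝ) ≤ ∑ x : B 0, |p 0 x - q 0 x| :=
            Finset.sum_nonneg fun x _ => abs_nonneg _
          nlinarith [hIH]
      _ = ∑ j : Fin (n+1), ∑ a, |p j a - q j a| := by
          rw [Fin.sum_univ_succ]; ring

/-- Key bound for any fintype index. -/
lemma key_gen (ι : Type) [Fintype ι] [DecidableEq ι] (B : ι → Type) [∀ k, Fintype (B k)]
    (p q : ∀ k, B k → ℝ)
    (hp0 : ∀ k a, 0 ≤ p k a) (hp1 : ∀ k, ∑ a, p k a = 1)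
    (hq0 : ∀ k a, 0 ≤ q k a) (hq1 : ∀ k, ∑ a, q k a = 1) :
    ∑ b : ∀ k, B k, |(∏ k, p k (b k)) - ∏ k, q k (b k)| ≤ ∑ k, ∑ a, |p k a - q k a| := by
  classical
  let e := Fintype.equivFin ι
  have hkey := key_fin (Fintype.card ι) (fun j => B (e.symm j)) (fun j => inferInstance)
    (fun j => p (e.symm j)) (fun j => q (e.symm j))
    (fun j a => hp0 _ _) (fun j => hp1 _) (fun j a => hq0 _ _) (fun j => hq1 _)
  have hL : ∑ b : ∀ k, B k, |(∏ k, p k (b k)) - ∏ k, q k (b k)|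
      = ∑ c : ∀ j, B (e.symm j), |(∏ j, p (e.symm j) (c j)) - ∏ j, q (e.symm j) (c j)| := by
    refine Fintype.sum_equiv (Equiv.piCongrLeft' B e) _ _ fun b => ?_
    simp only [Equiv.piCongrLeft'_apply]
    rw [Equiv.prod_comp e.symm fun k => p k (b k), Equiv.prod_comp e.symm fun k => q k (b k)]
  have hR : ∑ k, ∑ a, |p k a - q k a|
      = ∑ j, ∑ a, |p (e.symm j) a - q (e.symm j) a| :=
    (Equiv.sum_comp e.symm fun k => ∑ a, |p k a - q k a|).symm
  rw [hL, hR]; exact hkey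

/-- ℓ¹–ℓ² bound for a deviation of product policies: for every agent `i` and state `s`,
`‖π₋ᵢ(·|s) − π'₋ᵢ(·|s)‖₁ ≤ √(Σ_k |A_k|) · ‖π − π'‖₂`. -/
theorem prod_policy_l1_l2_deviation_bound
    {N : ℕ} {S : Type} [Fintype S] {A : Fin N → Type} [∀ k, Fintype (A k)]
    (π π' : ∀ k, S → A k → ℝ)
    (hπ : ∀ k s, (∀ a, 0 ≤ π k s a) ∧ ∑ a, π k s a = 1)
    (hπ' : ∀ k s, (∀ a, 0 ≤ π' k s a) ∧ ∑ a, π' k s a = 1)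
    (i : Fin N) (s : S) :
    ∑ b : ∀ k : {k : Fin N // k ≠ i}, A k.1,
        |(∏ k : {k : Fin N // k ≠ i}, π k.1 s (b k)) -
          ∏ k : {k : Fin N // k ≠ i}, π' k.1 s (b k)| ≤
      Real.sqrt (∑ k, (Fintype.card (A k) : ℝ)) *
        Real.sqrt (∑ k, ∑ s' : S, ∑ a, (π k s' a - π' k s' a) ^ 2) := by
  classical
  set ι := {k : Fin N // k ≠ i}
  have h1 : ∑ b : ∀ k : ι, A k.1,
      |(∏ k : ι, π k.1 s (b k)) - ∏ k : ι, π' k.1 s (b k)| ≤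
      ∑ k : ι, ∑ a, |π k.1 s a - π' k.1 s a| :=
    key_gen ι (fun k => A k.1) (fun k => π k.1 s) (fun k => π' k.1 s)
      (fun k => (hπ k.1 s).1) (fun k => (hπ k.1 s).2)
      (fun k => (hπ' k.1 s).1) (fun k => (hπ' k.1 s).2)
  -- Cauchy–Schwarz per coordinate
  have h2 : ∀ k : ι, ∑ a, |π k.1 s a - π' k.1 s a| ≤
      Real.sqrt (Fintype.card (A k.1)) *
        Real.sqrt (∑ a, (π k.1 s a - π' k.1 s a) ^ 2) := by
    intro k
    have hcs := Finset.sum_mul_sq_le_sq_mul_sq Finset.univ (fun _ : A k.1 => (1:ℝ))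
      (fun a => |π k.1 s a - π' k.1 s a|)
    simp only [one_mul, one_pow, sq_abs, Finset.sum_const, Finset.card_univ, nsmul_eq_mul,
      mul_one] at hcs
    have h0 : (0:ℝ) ≤ ∑ a, |π k.1 s a - π' k.1 s a| :=
      Finset.sum_nonneg fun a _ => abs_nonneg _
    calc ∑ a, |π k.1 s a - π' k.1 s a|
        = Real.sqrt ((∑ a, |π k.1 s a - π' k.1 s a|) ^ 2) := by
          rw [Real.sqrt_sq h0]
      _ ≤ Real.sqrt ((Fintype.card (A k.1) : ℝ) * ∑ a, (π k.1 s a - π' k.1 s a) ^ 2) :=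
          Real.sqrt_le_sqrt hcs
      _ = _ := Real.sqrt_mul (by positivity) _
  -- second Cauchy–Schwarz over coordinates
  have h3 : ∑ k : ι, Real.sqrt (Fintype.card (A k.1)) *
        Real.sqrt (∑ a, (π k.1 s a - π' k.1 s a) ^ 2) ≤
      Real.sqrt (∑ k : ι, (Fintype.card (A k.1) : ℝ)) *
        Real.sqrt (∑ k : ι, ∑ a, (π k.1 s a - π' k.1 s a) ^ 2) := by
    have hcs := Finset.sum_mul_sq_le_sq_mul_sq Finset.univ
      (fun k : ι => Real.sqrt (Fintype.card (A k.1)))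
      (fun k : ι => Real.sqrt (∑ a, (π k.1 s a - π' k.1 s a) ^ 2))
    have hsq1 : ∀ k : ι, Real.sqrt (Fintype.card (A k.1)) ^ 2 = (Fintype.card (A k.1) : ℝ) :=
      fun k => Real.sq_sqrt (by positivity)
    have hsq2 : ∀ k : ι, Real.sqrt (∑ a, (π k.1 s a - π' k.1 s a) ^ 2) ^ 2
        = ∑ a, (π k.1 s a - π' k.1 s a) ^ 2 :=
      fun k => Real.sq_sqrt (Finset.sum_nonneg fun a _ => sq_nonneg _)
    simp only [hsq1, hsq2] at hcs
    have h0 : (0:ℝ) ≤ ∑ k : ι, Real.sqrt (Fintype.card (A k.1)) *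
        Real.sqrt (∑ a, (π k.1 s a - π' k.1 s a) ^ 2) :=
      Finset.sum_nonneg fun k _ => mul_nonneg (Real.sqrt_nonneg _) (Real.sqrt_nonneg _)
    calc (∑ k : ι, Real.sqrt (Fintype.card (A k.1)) *
          Real.sqrt (∑ a, (π k.1 s a - π' k.1 s a) ^ 2))
        = Real.sqrt ((∑ k : ι, Real.sqrt (Fintype.card (A k.1)) *
            Real.sqrt (∑ a, (π k.1 s a - π' k.1 s a) ^ 2)) ^ 2) := by rw [Real.sqrt_sq h0]
      _ ≤ Real.sqrt ((∑ k : ι, (Fintype.card (A k.1) : ℝ)) *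
            ∑ k : ι, ∑ a, (π k.1 s a - π' k.1 s a) ^ 2) := Real.sqrt_le_sqrt hcs
      _ = _ := Real.sqrt_mul (Finset.sum_nonneg fun k _ => by positivity) _
  -- enlarge the sums
  have hsub1 : ∑ k : ι, (Fintype.card (A k.1) : ℝ) ≤ ∑ k, (Fintype.card (A k) : ℝ) := by
    rw [← Finset.sum_subtype (s := ({i}ᶜ : Finset (Fin N)))
      (fun x => by simp) (fun k => (Fintype.card (A k) : ℝ))]
    exact Finset.sum_le_sum_of_subset_of_nonneg (Finset.subset_univ _)
      (fun k _ _ => by positivity)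
  have hsub2 : ∑ k : ι, ∑ a, (π k.1 s a - π' k.1 s a) ^ 2 ≤
      ∑ k, ∑ s' : S, ∑ a, (π k s' a - π' k s' a) ^ 2 := by
    have hstep : ∀ k : ι, ∑ a, (π k.1 s a - π' k.1 s a) ^ 2 ≤
        ∑ s' : S, ∑ a, (π k.1 s' a - π' k.1 s' a) ^ 2 :=
      fun k => Finset.single_le_sum (f := fun s' => ∑ a, (π k.1 s' a - π' k.1 s' a) ^ 2)
        (fun s' _ => Finset.sum_nonneg fun a _ => sq_nonneg _) (Finset.mem_univ s)
    calc ∑ k : ι, ∑ a, (π k.1 s a - π' k.1 s a) ^ 2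
        ≤ ∑ k : ι, ∑ s' : S, ∑ a, (π k.1 s' a - π' k.1 s' a) ^ 2 :=
          Finset.sum_le_sum fun k _ => hstep k
      _ ≤ _ := by
          rw [← Finset.sum_subtype (s := ({i}ᶜ : Finset (Fin N))) (fun x => by simp)
            (fun k => ∑ s' : S, ∑ a, (π k s' a - π' k s' a) ^ 2)]
          exact Finset.sum_le_sum_of_subset_of_nonneg (Finset.subset_univ _)
            (fun k _ _ => Finset.sum_nonneg fun s' _ => Finset.sum_nonneg fun a _ => sq_nonneg _)
  refine h1.trans ((Finset.sum_le_sum fun k _ => h2 k).trans (h3.trans ?_))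
  exact mul_le_mul (Real.sqrt_le_sqrt hsub1) (Real.sqrt_le_sqrt hsub2)
    (Real.sqrt_nonneg _) (Real.sqrt_nonneg _)
end

section
/- ℓ¹ deviation of joint product policies bounded by the joint ℓ² deviation: ‖π − π'‖₁ ≤ √( |S| · Σ_{k=1}^N |A_k| ) · ‖π − π'‖₂, where ‖π − π'‖₁ = Σ_{s∈S} Σ_{a∈A_1×⋯×A_N} | ∏_{k=1}^N π_k(a_k|s) − ∏_{k=1}^N π'_k(a_k|s) |. -/
open Finset

lemma prod_policy_sum_one {N : ℕ} {A : Fin N → Type} [∀ k, Fintype (A k)]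
    (q : ∀ k, A k → ℝ) (hq1 : ∀ k, ∑ a, q k a = 1) :
    ∑ a : ∀ k, A k, ∏ k, q k (a k) = 1 := by
  classical
  rw [← Fintype.piFinset_univ, ← Finset.prod_univ_sum]
  simp [hq1]

lemma tv_prod : ∀ {N : ℕ} {A : Fin N → Type} [∀ k, Fintype (A k)]
    (p q : ∀ k, A k → ℝ), (∀ k a, 0 ≤ p k a) → (∀ k, ∑ a, p k a = 1) →
    (∀ k a, 0 ≤ q k a) → (∀ k, ∑ a, q k a = 1) →
    ∑ a : ∀ k, A k, |(∏ k, p k (a k)) - ∏ k, q k (a k)| ≤ ∑ k, ∑ a, |p k a - q k a| := by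
  intro N
  induction N with
  | zero => intro A _ p q _ _ _ _; simp
  | succ n ih =>
    intro A _ p q hp0 hp1 hq0 hq1
    rw [← (Fin.consEquiv A).sum_comp, Fintype.sum_prod_type]
    have key : ∀ (a0 : A 0) (ar : ∀ i : Fin n, A i.succ),
        |(∏ k, p k ((Fin.consEquiv A) (a0, ar) k)) - ∏ k, q k ((Fin.consEquiv A) (a0, ar) k)|
        ≤ p 0 a0 * |(∏ k : Fin n, p k.succ (ar k)) - ∏ k : Fin n, q k.succ (ar k)|
          + |p 0 a0 - q 0 a0| * ∏ k : Fin n, q k.succ (ar k) := by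
      intro a0 ar
      have he : ∀ (r : ∀ k, A k → ℝ), (∏ k, r k ((Fin.consEquiv A) (a0, ar) k))
          = r 0 a0 * ∏ k : Fin n, r k.succ (ar k) := by
        intro r
        rw [Fin.prod_univ_succ]
        simp [Fin.consEquiv]
      rw [he p, he q]
      have : p 0 a0 * ∏ k : Fin n, p k.succ (ar k) - q 0 a0 * ∏ k : Fin n, q k.succ (ar k)
          = p 0 a0 * ((∏ k : Fin n, p k.succ (ar k)) - ∏ k : Fin n, q k.succ (ar k))
            + (p 0 a0 - q 0 a0) * ∏ k : Fin n, q k.succ (ar k) := by ring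
      rw [this]
      refine (abs_add_le _ _).trans ?_
      rw [abs_mul, abs_mul, abs_of_nonneg (hp0 0 a0),
        abs_of_nonneg (Finset.prod_nonneg fun k _ => hq0 k.succ (ar k))]
    calc ∑ a0 : A 0, ∑ ar : ∀ i : Fin n, A i.succ,
          |(∏ k, p k ((Fin.consEquiv A) (a0, ar) k)) - ∏ k, q k ((Fin.consEquiv A) (a0, ar) k)|
        ≤ ∑ a0 : A 0, ∑ ar : ∀ i : Fin n, A i.succ,
            (p 0 a0 * |(∏ k : Fin n, p k.succ (ar k)) - ∏ k : Fin n, q k.succ (ar k)|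
            + |p 0 a0 - q 0 a0| * ∏ k : Fin n, q k.succ (ar k)) := by
          exact Finset.sum_le_sum fun a0 _ => Finset.sum_le_sum fun ar _ => key a0 ar
      _ = (∑ a0 : A 0, p 0 a0) * (∑ ar : ∀ i : Fin n, A i.succ,
            |(∏ k : Fin n, p k.succ (ar k)) - ∏ k : Fin n, q k.succ (ar k)|)
          + (∑ a0 : A 0, |p 0 a0 - q 0 a0|) * (∑ ar : ∀ i : Fin n, A i.succ,
            ∏ k : Fin n, q k.succ (ar k)) := by
          simp [Finset.sum_add_distrib, Finset.mul_sum, Finset.sum_mul]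
          rw [Finset.sum_comm]
          congr 1
          rw [Finset.sum_comm]
      _ ≤ 1 * (∑ k : Fin n, ∑ a, |p k.succ a - q k.succ a|)
          + (∑ a0 : A 0, |p 0 a0 - q 0 a0|) * 1 := by
          rw [hp1 0, prod_policy_sum_one (fun k => q k.succ) (fun k => hq1 k.succ)]
          simp only [one_mul, mul_one]
          exact add_le_add_left (ih (fun k => p k.succ) (fun k => q k.succ)
            (fun k => hp0 k.succ) (fun k => hp1 k.succ) (fun k => hq0 k.succ)
            (fun k => hq1 k.succ)) _
      _ = ∑ k : Fin (n+1), ∑ a, |p k a - q k a| := by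
          rw [Fin.sum_univ_succ]; ring

/-- ℓ¹ deviation of joint product policies bounded by the joint ℓ² deviation:
`‖π − π'‖₁ ≤ √(|S| · Σ_k |A_k|) · ‖π − π'‖₂`, where the ℓ¹ norm is of the joint
product policies `π(a|s) = ∏_k π_k(a_k|s)`. -/
theorem joint_product_policy_l1_le_l2
    {N : ℕ} {S : Type} [Fintype S] {A : Fin N → Type} [∀ k, Fintype (A k)]
    (π π' : ∀ k, S → A k → ℝ)
    (hπ : ∀ k s, (∀ a, 0 ≤ π k s a) ∧ ∑ a, π k s a = 1)
    (hπ' : ∀ k s, (∀ a, 0 ≤ π' k s a) ∧ ∑ a, π' k s a = 1) :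
    ∑ s : S, ∑ a : ∀ k, A k, |(∏ k, π k s (a k)) - ∏ k, π' k s (a k)| ≤
      Real.sqrt ((Fintype.card S : ℝ) * ∑ k, (Fintype.card (A k) : ℝ)) *
        Real.sqrt (∑ k, ∑ s : S, ∑ a, (π k s a - π' k s a) ^ 2) := by
  classical
  have h1 : ∑ s : S, ∑ a : ∀ k, A k, |(∏ k, π k s (a k)) - ∏ k, π' k s (a k)|
      ≤ ∑ s : S, ∑ k, ∑ a, |π k s a - π' k s a| := by
    refine Finset.sum_le_sum fun s _ => ?_
    exact tv_prod (fun k => π k s) (fun k => π' k s) (fun k => (hπ k s).1)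
      (fun k => (hπ k s).2) (fun k => (hπ' k s).1) (fun k => (hπ' k s).2)
  refine h1.trans ?_
  set T := S × Σ k : Fin N, A k
  have h2 : ∑ s : S, ∑ k, ∑ a, |π k s a - π' k s a|
      = ∑ t : T, 1 * |π t.2.1 t.1 t.2.2 - π' t.2.1 t.1 t.2.2| := by
    rw [Fintype.sum_prod_type]
    refine Finset.sum_congr rfl fun s _ => ?_
    rw [← Finset.univ_sigma_univ, Finset.sum_sigma]
    simp
  rw [h2]
  refine (Real.sum_mul_le_sqrt_mul_sqrt _ _ _).trans_eq ?_
  congr 1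
  · congr 1
    simp [T, Fintype.card_sigma, mul_comm]
  · congr 1
    rw [Fintype.sum_prod_type, Finset.sum_comm, ← Finset.univ_sigma_univ, Finset.sum_sigma]
    simp only [sq_abs]
    exact Finset.sum_congr rfl fun k _ => Finset.sum_comm
end

section
/- Lipschitz continuity of the state occupancy measure in the policy: For any two policies π and π̃, ‖d_ρ^π − d_ρ^{π̃}‖₁ ≤ (γ/(1−γ)) · Σ_{s∈S} d_ρ^π(s) ‖π(·|s) − π̃(·|s)‖₁ ≤ (γ/(1−γ)) · ‖π − π̃‖₁. -/
noncomputable section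

/-- Markov matrix induced by a policy in a single-agent MDP. -/
def markovMatrix1 {S A : Type} [Fintype S] [Fintype A]
    (P : S → A → S → ℝ) (π : S → A → ℝ) : Matrix S S ℝ :=
  Matrix.of fun s s' => ∑ a, π s a * P s a s'

/-- Normalized discounted state occupancy measure
`d_ρ^π(s) = (1−γ) Σ_t γ^t (ρ M_π^t)(s)`. -/
def stateOcc1 {S A : Type} [Fintype S] [DecidableEq S] [Fintype A]
    (γ : ℝ) (P : S → A → S → ℝ) (ρ : S → ℝ) (π : S → A → ℝ) (s : S) : ℝ :=
  (1 - γ) * ∑' t : ℕ, γ ^ t * Matrix.vecMul ρ (markovMatrix1 P π ^ t) s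

namespace OccAux

variable {S A : Type} [Fintype S] [DecidableEq S] [Fintype A]

lemma vecMul_pow_prob (M : Matrix S S ℝ) (hM0 : ∀ s s', 0 ≤ M s s')
    (hM1 : ∀ s, ∑ s', M s s' = 1) (ρ : S → ℝ)
    (hρ0 : ∀ s, 0 ≤ ρ s) (hρ1 : ∑ s, ρ s = 1) (t : ℕ) :
    (∀ s, 0 ≤ Matrix.vecMul ρ (M ^ t) s) ∧ ∑ s, Matrix.vecMul ρ (M ^ t) s = 1 := by
  induction t with
  | zero => simpa [Matrix.vecMul_one] using ⟨hρ0, hρ1⟩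
  | succ t ih =>
    have hrw : ∀ s, Matrix.vecMul ρ (M ^ (t + 1)) s
        = ∑ s', Matrix.vecMul ρ (M ^ t) s' * M s' s := by
      intro s
      rw [pow_succ, ← Matrix.vecMul_vecMul]
      simp [Matrix.vecMul, dotProduct]
    constructor
    · intro s
      rw [hrw]
      exact Finset.sum_nonneg fun s' _ => mul_nonneg (ih.1 s') (hM0 s' s)
    · simp only [hrw]
      rw [Finset.sum_comm]
      simp_rw [← Finset.mul_sum, hM1]
      simpa using ih.2

lemma markov_stoch (P : S → A → S → ℝ)
    (hP : ∀ s a, (∀ s', 0 ≤ P s a s') ∧ ∑ s', P s a s' = 1)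
    (π : S → A → ℝ) (hπ : ∀ s, (∀ a, 0 ≤ π s a) ∧ ∑ a, π s a = 1) :
    (∀ s s', 0 ≤ markovMatrix1 P π s s') ∧ ∀ s, ∑ s', markovMatrix1 P π s s' = 1 := by
  constructor
  · intro s s'
    exact Finset.sum_nonneg fun a _ => mul_nonneg ((hπ s).1 a) ((hP s a).1 s')
  · intro s
    unfold markovMatrix1
    simp only [Matrix.of_apply]
    rw [Finset.sum_comm]
    simp_rw [← Finset.mul_sum, (fun a => (hP s a).2)]
    simpa using (hπ s).2

lemma summable_aux (γ : ℝ) (hγ0 : 0 < γ) (hγ1 : γ < 1) (M : Matrix S S ℝ)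
    (hM0 : ∀ s s', 0 ≤ M s s') (hM1 : ∀ s, ∑ s', M s s' = 1) (ρ : S → ℝ)
    (hρ0 : ∀ s, 0 ≤ ρ s) (hρ1 : ∑ s, ρ s = 1) (s : S) :
    Summable (fun t : ℕ => γ ^ t * Matrix.vecMul ρ (M ^ t) s) := by
  apply Summable.of_nonneg_of_le
  · intro t
    exact mul_nonneg (pow_nonneg hγ0.le t) ((vecMul_pow_prob M hM0 hM1 ρ hρ0 hρ1 t).1 s)
  · intro t
    have h := vecMul_pow_prob M hM0 hM1 ρ hρ0 hρ1 t
    have hle : Matrix.vecMul ρ (M ^ t) s ≤ 1 := by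
      rw [← h.2]
      exact Finset.single_le_sum (fun s' _ => h.1 s') (Finset.mem_univ s)
    calc γ ^ t * Matrix.vecMul ρ (M ^ t) s ≤ γ ^ t * 1 :=
          mul_le_mul_of_nonneg_left hle (pow_nonneg hγ0.le t)
      _ = γ ^ t := mul_one _
  · exact summable_geometric_of_lt_one hγ0.le hγ1

lemma occ_nonneg (γ : ℝ) (hγ0 : 0 < γ) (hγ1 : γ < 1)
    (P : S → A → S → ℝ) (hP : ∀ s a, (∀ s', 0 ≤ P s a s') ∧ ∑ s', P s a s' = 1)
    (ρ : S → ℝ) (hρ : (∀ s, 0 ≤ ρ s) ∧ ∑ s, ρ s = 1)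
    (π : S → A → ℝ) (hπ : ∀ s, (∀ a, 0 ≤ π s a) ∧ ∑ a, π s a = 1) :
    (∀ s, 0 ≤ stateOcc1 γ P ρ π s) ∧ ∑ s, stateOcc1 γ P ρ π s = 1 := by
  obtain ⟨hM0, hM1⟩ := markov_stoch P hP π hπ
  constructor
  · intro s
    apply mul_nonneg (by linarith)
    apply tsum_nonneg
    intro t
    exact mul_nonneg (pow_nonneg hγ0.le t)
      ((vecMul_pow_prob _ hM0 hM1 ρ hρ.1 hρ.2 t).1 s)
  · unfold stateOcc1
    rw [← Finset.mul_sum, ← Summable.tsum_finsetSum (fun s _ => summable_aux γ hγ0 hγ1 _ hM0 hM1 ρ hρ.1 hρ.2 s)]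
    have : ∀ t : ℕ, ∑ s, γ ^ t * Matrix.vecMul ρ (markovMatrix1 P π ^ t) s = γ ^ t := by
      intro t
      rw [← Finset.mul_sum, (vecMul_pow_prob _ hM0 hM1 ρ hρ.1 hρ.2 t).2, mul_one]
    simp_rw [this]
    rw [tsum_geometric_of_lt_one hγ0.le hγ1]
    exact mul_inv_cancel₀ (by linarith)

lemma occ_fixed (γ : ℝ) (hγ0 : 0 < γ) (hγ1 : γ < 1)
    (P : S → A → S → ℝ) (hP : ∀ s a, (∀ s', 0 ≤ P s a s') ∧ ∑ s', P s a s' = 1)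
    (ρ : S → ℝ) (hρ : (∀ s, 0 ≤ ρ s) ∧ ∑ s, ρ s = 1)
    (π : S → A → ℝ) (hπ : ∀ s, (∀ a, 0 ≤ π s a) ∧ ∑ a, π s a = 1) (s : S) :
    stateOcc1 γ P ρ π s = (1 - γ) * ρ s
      + γ * ∑ s', stateOcc1 γ P ρ π s' * markovMatrix1 P π s' s := by
  obtain ⟨hM0, hM1⟩ := markov_stoch P hP π hπ
  set M := markovMatrix1 P π with hMdef
  have hsum : ∀ s, Summable (fun t : ℕ => γ ^ t * Matrix.vecMul ρ (M ^ t) s) :=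
    fun s => summable_aux γ hγ0 hγ1 M hM0 hM1 ρ hρ.1 hρ.2 s
  have hrw : ∀ t (s : S), Matrix.vecMul ρ (M ^ (t + 1)) s
      = ∑ s', Matrix.vecMul ρ (M ^ t) s' * M s' s := by
    intro t s
    rw [pow_succ, ← Matrix.vecMul_vecMul]
    simp [Matrix.vecMul, dotProduct]
  have key : (∑' t : ℕ, γ ^ t * Matrix.vecMul ρ (M ^ t) s)
      = ρ s + γ * ∑ s', (∑' t : ℕ, γ ^ t * Matrix.vecMul ρ (M ^ t) s') * M s' s := by
    rw [Summable.tsum_eq_zero_add (hsum s)]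
    congr 1
    · simp [Matrix.vecMul_one]
    · have h1 : ∀ t : ℕ, γ ^ (t + 1) * Matrix.vecMul ρ (M ^ (t + 1)) s
          = ∑ s', γ * ((γ ^ t * Matrix.vecMul ρ (M ^ t) s') * M s' s) := by
        intro t
        rw [hrw t s, pow_succ, Finset.mul_sum]
        ring_nf
      simp_rw [h1]
      rw [Summable.tsum_finsetSum (fun s' _ => by
        apply Summable.mul_left
        exact (hsum s').mul_right _)]
      rw [Finset.mul_sum]
      congr 1
      ext s'
      rw [tsum_mul_left, tsum_mul_right]
  unfold stateOcc1
  rw [← hMdef, key, mul_add]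
  congr 1
  simp only [Finset.mul_sum]
  exact Finset.sum_congr rfl fun s' _ => by ring

end OccAux

/-- Lipschitz continuity of the state occupancy measure in the policy:
`‖d_ρ^π − d_ρ^π̃‖₁ ≤ (γ/(1−γ)) Σ_s d_ρ^π(s) ‖π(·|s) − π̃(·|s)‖₁ ≤ (γ/(1−γ)) ‖π − π̃‖₁`. -/
theorem occupancy_measure_lipschitz_in_policy
    {S A : Type} [Fintype S] [DecidableEq S] [Fintype A]
    (γ : ℝ) (hγ0 : 0 < γ) (hγ1 : γ < 1)
    (P : S → A → S → ℝ) (hP : ∀ s a, (∀ s', 0 ≤ P s a s') ∧ ∑ s', P s a s' = 1)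
    (ρ : S → ℝ) (hρ : (∀ s, 0 ≤ ρ s) ∧ ∑ s, ρ s = 1)
    (π πt : S → A → ℝ)
    (hπ : ∀ s, (∀ a, 0 ≤ π s a) ∧ ∑ a, π s a = 1)
    (hπt : ∀ s, (∀ a, 0 ≤ πt s a) ∧ ∑ a, πt s a = 1) :
    (∑ s, |stateOcc1 γ P ρ π s - stateOcc1 γ P ρ πt s| ≤
        (γ / (1 - γ)) * ∑ s, stateOcc1 γ P ρ π s * ∑ a, |π s a - πt s a|) ∧
      ((γ / (1 - γ)) * ∑ s, stateOcc1 γ P ρ π s * ∑ a, |π s a - πt s a| ≤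
        (γ / (1 - γ)) * ∑ s, ∑ a, |π s a - πt s a|) := by
  have h1γ : (0:ℝ) < 1 - γ := by linarith
  set x := stateOcc1 γ P ρ π with hxdef
  set y := stateOcc1 γ P ρ πt with hydef
  set M := markovMatrix1 P π with hMdef
  set N := markovMatrix1 P πt with hNdef
  obtain ⟨hM0, hM1⟩ := OccAux.markov_stoch P hP π hπ
  obtain ⟨hN0, hN1⟩ := OccAux.markov_stoch P hP πt hπt
  obtain ⟨hx0, hx1⟩ := OccAux.occ_nonneg γ hγ0 hγ1 P hP ρ hρ π hπ
  have hx := fun s => OccAux.occ_fixed γ hγ0 hγ1 P hP ρ hρ π hπ s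
  have hy := fun s => OccAux.occ_fixed γ hγ0 hγ1 P hP ρ hρ πt hπt s
  -- key pointwise identity
  have hdiff : ∀ s, x s - y s
      = γ * ∑ s', ((x s' - y s') * N s' s + x s' * (M s' s - N s' s)) := by
    intro s
    rw [hxdef, hydef, hx s, hy s, ← hMdef, ← hNdef, ← hxdef, ← hydef]
    have h : ∀ s', (x s' - y s') * N s' s + x s' * (M s' s - N s' s)
        = x s' * M s' s - y s' * N s' s := fun s' => by ring
    simp_rw [h, Finset.sum_sub_distrib]
    ring
  -- bound on row L1 distance of M and N
  have hMN : ∀ s', ∑ s, |M s' s - N s' s| ≤ ∑ a, |π s' a - πt s' a| := by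
    intro s'
    have hpt : ∀ s, |M s' s - N s' s| ≤ ∑ a, |π s' a - πt s' a| * P s' a s := by
      intro s
      have : M s' s - N s' s = ∑ a, (π s' a - πt s' a) * P s' a s := by
        simp [hMdef, hNdef, markovMatrix1, sub_mul, Finset.sum_sub_distrib]
      rw [this]
      refine (Finset.abs_sum_le_sum_abs _ _).trans ?_
      apply Finset.sum_le_sum
      intro a _
      rw [abs_mul, abs_of_nonneg ((hP s' a).1 s)]
    calc ∑ s, |M s' s - N s' s| ≤ ∑ s, ∑ a, |π s' a - πt s' a| * P s' a s :=
          Finset.sum_le_sum fun s _ => hpt s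
      _ = ∑ a, |π s' a - πt s' a| * ∑ s, P s' a s := by
          rw [Finset.sum_comm]; simp_rw [← Finset.mul_sum]
      _ = ∑ a, |π s' a - πt s' a| := by simp_rw [(fun a => (hP s' a).2)]; simp
  set L := ∑ s, |x s - y s| with hLdef
  set R := ∑ s', x s' * ∑ a, |π s' a - πt s' a| with hRdef
  have hkey : L ≤ γ * (L + R) := by
    have step1 : L ≤ γ * ∑ s, ∑ s', (|x s' - y s'| * N s' s + x s' * |M s' s - N s' s|) := by
      rw [hLdef, Finset.mul_sum]
      apply Finset.sum_le_sum
      intro s _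
      rw [hdiff s, abs_mul, abs_of_nonneg hγ0.le]
      apply mul_le_mul_of_nonneg_left _ hγ0.le
      refine (Finset.abs_sum_le_sum_abs _ _).trans ?_
      apply Finset.sum_le_sum
      intro s' _
      refine (abs_add_le _ _).trans ?_
      rw [abs_mul, abs_mul, abs_of_nonneg (hN0 s' s), abs_of_nonneg (hx0 s')]
    refine step1.trans ?_
    apply mul_le_mul_of_nonneg_left _ hγ0.le
    rw [Finset.sum_comm]
    simp_rw [Finset.sum_add_distrib, ← Finset.mul_sum]
    apply add_le_add
    · rw [hNdef]
      simp_rw [hN1, mul_one]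
      exact le_of_eq hLdef.symm
    · rw [hRdef]
      apply Finset.sum_le_sum
      intro s' _
      exact mul_le_mul_of_nonneg_left (hMN s') (hx0 s')
  have hR0 : 0 ≤ R := Finset.sum_nonneg fun s' _ =>
    mul_nonneg (hx0 s') (Finset.sum_nonneg fun a _ => abs_nonneg _)
  constructor
  · -- (1-γ) L ≤ γ R
    have h2 : (1 - γ) * L ≤ γ * R := by nlinarith
    calc L ≤ (γ * R) / (1 - γ) := by rw [le_div_iff₀ h1γ]; nlinarith
      _ = γ / (1 - γ) * R := by ring
  · apply mul_le_mul_of_nonneg_left _ (le_of_lt (div_pos hγ0 h1γ))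
    apply Finset.sum_le_sum
    intro s _
    have hxle : x s ≤ 1 := by
      rw [← hx1]
      exact Finset.single_le_sum (fun s' _ => hx0 s') (Finset.mem_univ s)
    calc x s * ∑ a, |π s a - πt s a| ≤ 1 * ∑ a, |π s a - πt s a| :=
          mul_le_mul_of_nonneg_right hxle (Finset.sum_nonneg fun a _ => abs_nonneg _)
      _ = _ := one_mul _
end
end

section
/- Lipschitz continuity of the policy gradient of the value function with respect to the reward: For a fixed policy π and any two reward functions r, r' : S×A → ℝ, the vectors G_r, G_{r'} ∈ ℝ^{S×A} with entries G_r(s,a) = (1/(1−γ)) d_ρ^π(s) Q^π(r)(s,a) (the gradient of the value V_ρ^π(r) with respect to the policy under the direct parameterization) satisfy ‖G_r − G_{r'}‖₂ ≤ ( √|A| / (1−γ)² ) · ‖r − r'‖_∞, where ‖·‖₂ is the Euclidean norm on ℝ^{S×A} and ‖r − r'‖_∞ = max_{(s,a)∈S×A} |r(s,a) − r'(s,a)|. -/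
noncomputable section

section Aux

set_option linter.unusedSectionVars false

variable {S A : Type} [Fintype S] [DecidableEq S] [Fintype A]

lemma vecMul_apply (v : S → ℝ) (M : Matrix S S ℝ) (s : S) :
    Matrix.vecMul v M s = ∑ s', v s' * M s' s := by
  simp [Matrix.vecMul, dotProduct]

lemma markov_nonneg (P : S → A → S → ℝ) (π : S → A → ℝ)
    (hP : ∀ s a, (∀ s', 0 ≤ P s a s') ∧ ∑ s', P s a s' = 1)
    (hπ : ∀ s, (∀ a, 0 ≤ π s a) ∧ ∑ a, π s a = 1) (s s' : S) :
    0 ≤ markovMatrix1 P π s s' := by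
  apply Finset.sum_nonneg
  intro a _
  exact mul_nonneg ((hπ s).1 a) ((hP s a).1 s')

lemma markov_rowsum (P : S → A → S → ℝ) (π : S → A → ℝ)
    (hP : ∀ s a, (∀ s', 0 ≤ P s a s') ∧ ∑ s', P s a s' = 1)
    (hπ : ∀ s, (∀ a, 0 ≤ π s a) ∧ ∑ a, π s a = 1) (s : S) :
    ∑ s', markovMatrix1 P π s s' = 1 := by
  unfold markovMatrix1
  simp only [Matrix.of_apply]
  rw [Finset.sum_comm]
  have : ∀ a, ∑ s', π s a * P s a s' = π s a := by
    intro a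
    rw [← Finset.mul_sum, (hP s a).2, mul_one]
  simp only [this]
  exact (hπ s).2

lemma vec_pow_props (P : S → A → S → ℝ) (π : S → A → ℝ) (ρ : S → ℝ)
    (hP : ∀ s a, (∀ s', 0 ≤ P s a s') ∧ ∑ s', P s a s' = 1)
    (hρ0 : ∀ s, 0 ≤ ρ s) (hρ1 : ∑ s, ρ s = 1)
    (hπ : ∀ s, (∀ a, 0 ≤ π s a) ∧ ∑ a, π s a = 1) (t : ℕ) :
    (∀ s, 0 ≤ Matrix.vecMul ρ (markovMatrix1 P π ^ t) s) ∧
      ∑ s, Matrix.vecMul ρ (markovMatrix1 P π ^ t) s = 1 := by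
  induction t with
  | zero => simpa [Matrix.vecMul_one] using ⟨hρ0, hρ1⟩
  | succ t ih =>
    rw [pow_succ]
    constructor
    · intro s
      rw [← Matrix.vecMul_vecMul, vecMul_apply]
      apply Finset.sum_nonneg
      intro s' _
      exact mul_nonneg (ih.1 s') (markov_nonneg P π hP hπ s' s)
    · have : ∀ s, Matrix.vecMul ρ (markovMatrix1 P π ^ t * markovMatrix1 P π) s
          = ∑ s', Matrix.vecMul ρ (markovMatrix1 P π ^ t) s' * markovMatrix1 P π s' s := by
        intro s
        rw [← Matrix.vecMul_vecMul, vecMul_apply]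
      simp only [this]
      rw [Finset.sum_comm]
      have h2 : ∀ s', ∑ s, Matrix.vecMul ρ (markovMatrix1 P π ^ t) s' * markovMatrix1 P π s' s
          = Matrix.vecMul ρ (markovMatrix1 P π ^ t) s' := by
        intro s'
        rw [← Finset.mul_sum, markov_rowsum P π hP hπ, mul_one]
      simp only [h2]
      exact ih.2

lemma stateOcc1_props (γ : ℝ) (hγ0 : 0 < γ) (hγ1 : γ < 1)
    (P : S → A → S → ℝ) (π : S → A → ℝ) (ρ : S → ℝ)
    (hP : ∀ s a, (∀ s', 0 ≤ P s a s') ∧ ∑ s', P s a s' = 1)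
    (hρ0 : ∀ s, 0 ≤ ρ s) (hρ1 : ∑ s, ρ s = 1)
    (hπ : ∀ s, (∀ a, 0 ≤ π s a) ∧ ∑ a, π s a = 1) :
    (∀ s, 0 ≤ stateOcc1 γ P ρ π s) ∧ ∑ s, stateOcc1 γ P ρ π s = 1 := by
  have hv := vec_pow_props P π ρ hP hρ0 hρ1 hπ
  have hle : ∀ t s, Matrix.vecMul ρ (markovMatrix1 P π ^ t) s ≤ 1 := by
    intro t s
    calc Matrix.vecMul ρ (markovMatrix1 P π ^ t) s
        ≤ ∑ s', Matrix.vecMul ρ (markovMatrix1 P π ^ t) s' :=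
          Finset.single_le_sum (fun s' _ => (hv t).1 s') (Finset.mem_univ s)
      _ = 1 := (hv t).2
  have hsumm : ∀ s, Summable (fun t : ℕ => γ ^ t * Matrix.vecMul ρ (markovMatrix1 P π ^ t) s) := by
    intro s
    apply Summable.of_nonneg_of_le
      (fun t => mul_nonneg (pow_nonneg hγ0.le t) ((hv t).1 s))
      (fun t => by
        calc γ ^ t * Matrix.vecMul ρ (markovMatrix1 P π ^ t) s
            ≤ γ ^ t * 1 := by
              exact mul_le_mul_of_nonneg_left (hle t s) (pow_nonneg hγ0.le t)
          _ = γ ^ t := mul_one _)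
    exact summable_geometric_of_lt_one hγ0.le hγ1
  constructor
  · intro s
    apply mul_nonneg (by linarith)
    exact tsum_nonneg fun t => mul_nonneg (pow_nonneg hγ0.le t) ((hv t).1 s)
  · unfold stateOcc1
    rw [← Finset.mul_sum]
    rw [← Summable.tsum_finsetSum (fun s _ => hsumm s)]
    have : ∀ t : ℕ, ∑ s, γ ^ t * Matrix.vecMul ρ (markovMatrix1 P π ^ t) s = γ ^ t := by
      intro t
      rw [← Finset.mul_sum, (hv t).2, mul_one]
    simp only [this]
    rw [tsum_geometric_of_lt_one hγ0.le hγ1]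
    rw [mul_inv_cancel₀ (by linarith : (1:ℝ) - γ ≠ 0)]

end Aux

/-- Lipschitz continuity of the policy gradient of the value function with respect to the
reward.  `Q` and `Q'` are the action-value functions of rewards `r`, `r'` (solutions of the
corresponding Bellman equations), `G_r(s,a) = (1/(1−γ)) d_ρ^π(s) Q^π(r)(s,a)` is the
gradient of the value with respect to the direct policy parameterization, and the bound is
`‖G_r − G_{r'}‖₂ ≤ (√|A|/(1−γ)²) ‖r − r'‖_∞`. -/
theorem policy_gradient_lipschitz_in_reward
    {S A : Type} [Fintype S] [DecidableEq S] [Fintype A] [Nonempty S] [Nonempty A]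
    (γ : ℝ) (hγ0 : 0 < γ) (hγ1 : γ < 1)
    (P : S → A → S → ℝ) (hP : ∀ s a, (∀ s', 0 ≤ P s a s') ∧ ∑ s', P s a s' = 1)
    (ρ : S → ℝ) (hρ : (∀ s, 0 ≤ ρ s) ∧ ∑ s, ρ s = 1)
    (π : S → A → ℝ) (hπ : ∀ s, (∀ a, 0 ≤ π s a) ∧ ∑ a, π s a = 1)
    (r r' : S → A → ℝ)
    (Q Q' : S → A → ℝ)
    (hQ : ∀ s a, Q s a = r s a + γ * ∑ s', P s a s' * ∑ a', π s' a' * Q s' a')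
    (hQ' : ∀ s a, Q' s a = r' s a + γ * ∑ s', P s a s' * ∑ a', π s' a' * Q' s' a') :
    Real.sqrt (∑ s, ∑ a,
        ((1 / (1 - γ)) * stateOcc1 γ P ρ π s * Q s a -
          (1 / (1 - γ)) * stateOcc1 γ P ρ π s * Q' s a) ^ 2) ≤
      (Real.sqrt (Fintype.card A) / (1 - γ) ^ 2) *
        ⨆ p : S × A, |r p.1 p.2 - r' p.1 p.2| := by
  have h1γ : (0:ℝ) < 1 - γ := by linarith
  have hne : (1:ℝ) - γ ≠ 0 := by linarith
  set d := stateOcc1 γ P ρ π with hd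
  obtain ⟨hd0, hd1⟩ := stateOcc1_props γ hγ0 hγ1 P π ρ hP hρ.1 hρ.2 hπ
  have hdle1 : ∀ s, d s ≤ 1 := by
    intro s
    calc d s ≤ ∑ s', d s' := Finset.single_le_sum (fun s' _ => hd0 s') (Finset.mem_univ s)
      _ = 1 := hd1
  set M0 := ⨆ p : S × A, |r p.1 p.2 - r' p.1 p.2| with hM0
  set K0 := ⨆ p : S × A, |Q p.1 p.2 - Q' p.1 p.2| with hK0
  have hM0le : ∀ s a, |r s a - r' s a| ≤ M0 := fun s a =>
    le_ciSup (f := fun p : S × A => |r p.1 p.2 - r' p.1 p.2|) (Finite.bddAbove_range _) (s, a)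
  have hK0le : ∀ s a, |Q s a - Q' s a| ≤ K0 := fun s a =>
    le_ciSup (f := fun p : S × A => |Q p.1 p.2 - Q' p.1 p.2|) (Finite.bddAbove_range _) (s, a)
  have hM0nn : 0 ≤ M0 := le_trans (abs_nonneg _) (hM0le Classical.ofNonempty Classical.ofNonempty)
  have hK0nn : 0 ≤ K0 := le_trans (abs_nonneg _) (hK0le Classical.ofNonempty Classical.ofNonempty)
  -- contraction bound
  have hstep : ∀ s a, |Q s a - Q' s a| ≤ M0 + γ * K0 := by
    intro s a
    rw [hQ s a, hQ' s a]
    have hinner : ∀ s', |∑ a', π s' a' * Q s' a' - ∑ a', π s' a' * Q' s' a'| ≤ K0 := by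
      intro s'
      rw [← Finset.sum_sub_distrib]
      calc |∑ a', (π s' a' * Q s' a' - π s' a' * Q' s' a')|
          ≤ ∑ a', |π s' a' * Q s' a' - π s' a' * Q' s' a'| := Finset.abs_sum_le_sum_abs _ _
        _ = ∑ a', π s' a' * |Q s' a' - Q' s' a'| := by
            apply Finset.sum_congr rfl
            intro a' _
            rw [← mul_sub, abs_mul, abs_of_nonneg ((hπ s').1 a')]
        _ ≤ ∑ a', π s' a' * K0 := by
            apply Finset.sum_le_sum
            intro a' _
            exact mul_le_mul_of_nonneg_left (hK0le s' a') ((hπ s').1 a')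
        _ = K0 := by rw [← Finset.sum_mul, (hπ s').2, one_mul]
    have houter : |∑ s', P s a s' * ∑ a', π s' a' * Q s' a'
        - ∑ s', P s a s' * ∑ a', π s' a' * Q' s' a'| ≤ K0 := by
      rw [← Finset.sum_sub_distrib]
      calc |∑ s', (P s a s' * ∑ a', π s' a' * Q s' a' - P s a s' * ∑ a', π s' a' * Q' s' a')|
          ≤ ∑ s', |P s a s' * ∑ a', π s' a' * Q s' a' - P s a s' * ∑ a', π s' a' * Q' s' a'| :=
            Finset.abs_sum_le_sum_abs _ _
        _ ≤ ∑ s', P s a s' * K0 := by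
            apply Finset.sum_le_sum
            intro s' _
            rw [← mul_sub, abs_mul, abs_of_nonneg ((hP s a).1 s')]
            exact mul_le_mul_of_nonneg_left (hinner s') ((hP s a).1 s')
        _ = K0 := by rw [← Finset.sum_mul, (hP s a).2, one_mul]
    calc |r s a + γ * ∑ s', P s a s' * ∑ a', π s' a' * Q s' a'
          - (r' s a + γ * ∑ s', P s a s' * ∑ a', π s' a' * Q' s' a')|
        = |(r s a - r' s a) + γ * ((∑ s', P s a s' * ∑ a', π s' a' * Q s' a')
            - ∑ s', P s a s' * ∑ a', π s' a' * Q' s' a')| := by ring_nf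
      _ ≤ |r s a - r' s a| + |γ * ((∑ s', P s a s' * ∑ a', π s' a' * Q s' a')
            - ∑ s', P s a s' * ∑ a', π s' a' * Q' s' a')| := abs_add_le _ _
      _ ≤ M0 + γ * K0 := by
          apply add_le_add (hM0le s a)
          rw [abs_mul, abs_of_nonneg hγ0.le]
          exact mul_le_mul_of_nonneg_left houter hγ0.le
  have hK0M0 : K0 ≤ M0 / (1 - γ) := by
    have : K0 ≤ M0 + γ * K0 := by
      apply ciSup_le
      intro p
      exact hstep p.1 p.2
    rw [le_div_iff₀ h1γ]
    nlinarith
  -- main bound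
  have hQb : ∀ s a, |Q s a - Q' s a| ≤ M0 / (1 - γ) := fun s a => (hK0le s a).trans hK0M0
  set B := Real.sqrt (Fintype.card A) / (1 - γ) ^ 2 * M0 with hB
  have hBnn : 0 ≤ B := by
    apply mul_nonneg _ hM0nn
    positivity
  have key : ∑ s, ∑ a, ((1 / (1 - γ)) * d s * Q s a - (1 / (1 - γ)) * d s * Q' s a) ^ 2 ≤ B ^ 2 := by
    have hB2 : B ^ 2 = (Fintype.card A : ℝ) * (M0 ^ 2 / (1 - γ) ^ 4) := by
      rw [hB, mul_pow, div_pow, Real.sq_sqrt (Nat.cast_nonneg _)]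
      ring
    have hterm : ∀ s a, ((1 / (1 - γ)) * d s * Q s a - (1 / (1 - γ)) * d s * Q' s a) ^ 2
        ≤ d s ^ 2 * (M0 ^ 2 / (1 - γ) ^ 4) := by
      intro s a
      have : (1 / (1 - γ)) * d s * Q s a - (1 / (1 - γ)) * d s * Q' s a
          = (1 / (1 - γ)) * d s * (Q s a - Q' s a) := by ring
      rw [this, mul_pow, mul_pow]
      have h1 : (Q s a - Q' s a) ^ 2 ≤ (M0 / (1 - γ)) ^ 2 := by
        obtain ⟨hl, hr⟩ := abs_le.mp (hQb s a)
        exact sq_le_sq' hl hr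
      calc (1 / (1 - γ)) ^ 2 * d s ^ 2 * (Q s a - Q' s a) ^ 2
          ≤ (1 / (1 - γ)) ^ 2 * d s ^ 2 * (M0 / (1 - γ)) ^ 2 := by
            apply mul_le_mul_of_nonneg_left h1
            positivity
        _ = d s ^ 2 * (M0 ^ 2 / (1 - γ) ^ 4) := by
            field_simp
    calc ∑ s, ∑ a, ((1 / (1 - γ)) * d s * Q s a - (1 / (1 - γ)) * d s * Q' s a) ^ 2
        ≤ ∑ s, ∑ a : A, d s ^ 2 * (M0 ^ 2 / (1 - γ) ^ 4) := by
          apply Finset.sum_le_sum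
          intro s _
          exact Finset.sum_le_sum fun a _ => hterm s a
      _ = (Fintype.card A : ℝ) * (M0 ^ 2 / (1 - γ) ^ 4) * ∑ s, d s ^ 2 := by
          rw [Finset.mul_sum]
          apply Finset.sum_congr rfl
          intro s _
          rw [Finset.sum_const, nsmul_eq_mul, Finset.card_univ]
          ring
      _ ≤ (Fintype.card A : ℝ) * (M0 ^ 2 / (1 - γ) ^ 4) * 1 := by
          apply mul_le_mul_of_nonneg_left _ (by positivity)
          calc ∑ s, d s ^ 2 ≤ ∑ s, d s := by
                apply Finset.sum_le_sum
                intro s _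
                nlinarith [hd0 s, hdle1 s]
            _ = 1 := hd1
      _ = B ^ 2 := by rw [hB2]; ring
  calc Real.sqrt (∑ s, ∑ a, ((1 / (1 - γ)) * d s * Q s a - (1 / (1 - γ)) * d s * Q' s a) ^ 2)
      ≤ Real.sqrt (B ^ 2) := Real.sqrt_le_sqrt key
    _ = B := by rw [Real.sqrt_sq hBnn]
end
end
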